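/- arXiv:1905.01275 — 3 statements merged into one kernel-verified Lean document; each statement's English description precedes it below -/
import Mathlib

section
/- For two orthogonal projections E and F on a finite-dimensional Hilbert space, 1 - ‖EF - E∧F‖ equals the least eigenvalue of E + F that is strictly greater than 0 (equivalently, the least nontrivial eigenvalue of E+F, where 0 and 2 are the trivial eigenvalues), provided E + F has an eigenvalue in the open interval (0,2). -/
noncomputable def projOnto {H : Type*} [NormedAddCommGroup H] [InnerProductSpace ℂ H]
    [FiniteDimensional ℂ H] (K : Submodule ℂ H) : H →L[ℂ] H :=
  K.subtypeL.comp (K.orthogonalProjectionOnto)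

/-!
Write `E, F, P` for the orthogonal projections onto `K, L, K ⊓ L` and `A = EF - P`; then
`A⋆A = FEF - P`. If `(E + F) x = μ x` with `μ ≠ 0, 2`, then `P x = 0` and `EFx = (μ - 1) Ex`,
`FEx = (μ - 1) Fx`, so `Fx` is an eigenvector of `A⋆A` for `(1 - μ)²` and `|1 - μ| ≤ ‖A‖`.
Conversely `‖A‖² = ‖A⋆A‖` is an eigenvalue of the positive operator `A⋆A`. For an eigenvector
`y` and `c = ‖A‖ > 0` one gets `Fy = y`, `FEy = c² y` and `‖Ey‖ = c ‖y‖`, so `c < 1` (otherwise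
`y ∈ K ⊓ L`), and `y - c⁻¹ Ey` is an eigenvector of `E + F` for `1 - c`. When `‖A‖ = 0`, the
bound forces the eigenvalue in `(0, 2)` to be `1`.
-/

open ContinuousLinearMap Module.End Submodule

theorem IsStarProjection.star_mul_sub_mul_mul_sub {R : Type*} [Ring R] [StarRing R]
    {e f p : R} (he : IsStarProjection e) (hf : IsSelfAdjoint f) (hp : IsStarProjection p)
    (hpe : p * e = p) (hpf : p * f = p) :
    star (e * f - p) * (e * f - p) = f * e * f - p := by
  have hep : e * p = p := by
    simpa [he.isSelfAdjoint.star_eq, hp.isSelfAdjoint.star_eq] using congr(star $hpe)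
  have hfp : f * p = p := by
    simpa [hf.star_eq, hp.isSelfAdjoint.star_eq] using congr(star $hpf)
  rw [star_sub, star_mul, he.isSelfAdjoint.star_eq, hf.star_eq, hp.isSelfAdjoint.star_eq]
  calc (f * e - p) * (e * f - p) = f * (e * e) * f - f * (e * p) - p * e * f + p * p := by
        noncomm_ring
    _ = f * e * f - p := by
      rw [he.isIdempotentElem.eq, hep, hfp, hpe, hpf, hp.isIdempotentElem.eq]
      abel

theorem ContinuousLinearMap.norm_le_opNorm_of_apply_eq_smul {𝕜 E : Type*}
    [NontriviallyNormedField 𝕜] [NormedAddCommGroup E] [NormedSpace 𝕜 E] {T : E →L[𝕜] E}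
    {v : E} {a : 𝕜} (h : T v = a • v) (hv : v ≠ 0) : ‖a‖ ≤ ‖T‖ := by
  refine le_of_mul_le_mul_right ?_ (norm_pos_iff.mpr hv)
  rw [← norm_smul, ← h]
  exact T.le_opNorm v

section InnerProductSpace

variable {𝕜 H : Type*} [RCLike 𝕜] [NormedAddCommGroup H] [InnerProductSpace 𝕜 H]

theorem Submodule.starProjection_starProjection_of_le {U V : Submodule 𝕜 H}
    [U.HasOrthogonalProjection] [V.HasOrthogonalProjection] (h : U ≤ V) (x : H) :
    U.starProjection (V.starProjection x) = U.starProjection x :=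
  congr($(starProjection_comp_starProjection_of_le h) x)

theorem Submodule.starProjection_starProjection_self (U : Submodule 𝕜 H)
    [U.HasOrthogonalProjection] (x : H) :
    U.starProjection (U.starProjection x) = U.starProjection x :=
  starProjection_starProjection_of_le le_rfl x

section TwoProjections

variable {K L : Submodule 𝕜 H} [K.HasOrthogonalProjection] [L.HasOrthogonalProjection]

theorem Submodule.starProjection_starProjection_of_add_eq_smul {x : H} {μ : 𝕜}
    (h : K.starProjection x + L.starProjection x = μ • x) :
    K.starProjection (L.starProjection x) = (μ - 1) • K.starProjection x := by
  have hK := congr(K.starProjection $h)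
  rw [map_add, map_smul, starProjection_starProjection_self] at hK
  rw [sub_smul, one_smul]
  exact eq_sub_of_add_eq' hK

theorem Submodule.hasEigenvector_add_starProjection {y : H} {c : 𝕜} (hc₀ : c ≠ 0) (hc₁ : c ≠ 1)
    (hy : y ≠ 0) (hLy : L.starProjection y = y)
    (hLK : L.starProjection (K.starProjection y) = c ^ 2 • y) :
    HasEigenvector (K.starProjection + L.starProjection).toLinearMap (1 - c)
      (y - c⁻¹ • K.starProjection y) := by
  refine ⟨mem_eigenspace_iff.mpr ?_, fun hz => hy ?_⟩
  · simp only [coe_coe, add_apply, map_sub, map_smul, starProjection_starProjection_self, hLy,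
      hLK, smul_smul, smul_sub]
    rw [smul_add, smul_smul, show c⁻¹ * c ^ 2 = c by field_simp, sub_mul, one_mul,
      mul_inv_cancel₀ hc₀]
    module
  · have hy' : y = c⁻¹ • K.starProjection y := sub_eq_zero.mp hz
    have hKy : K.starProjection y = c⁻¹ • K.starProjection y := by
      conv_lhs => rw [hy', map_smul, starProjection_starProjection_self]
    have hKy0 : K.starProjection y = 0 := by
      have : (1 - c⁻¹) • K.starProjection y = 0 := by rw [sub_smul, one_smul, ← hKy, sub_self]
      exact (smul_eq_zero.mp this).resolve_left (sub_ne_zero.mpr (inv_ne_one.mpr hc₁).symm)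
    rw [hy', hKy0, smul_zero]

theorem Submodule.norm_starProjection_apply_eq_mul_norm {y : H} {c : ℝ} (hc : 0 ≤ c)
    (hLy : L.starProjection y = y) (hLK : L.starProjection (K.starProjection y) = (c : 𝕜) ^ 2 • y) :
    ‖K.starProjection y‖ = c * ‖y‖ := by
  refine (sq_eq_sq₀ (norm_nonneg _) (by positivity)).mp ?_
  calc ‖K.starProjection y‖ ^ 2 = RCLike.re (inner 𝕜 (K.starProjection y) y) := by
        rw [re_inner_starProjection_eq_normSq, starProjection_apply, norm_coe]
    _ = RCLike.re (inner 𝕜 (L.starProjection (K.starProjection y)) y) := by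
        rw [inner_starProjection_left_eq_right L, hLy]
    _ = (c * ‖y‖) ^ 2 := by
        rw [hLK, inner_smul_left, ← RCLike.ofReal_pow, RCLike.conj_ofReal, RCLike.re_ofReal_mul,
          inner_self_eq_norm_sq, mul_pow]

variable [(K ⊓ L).HasOrthogonalProjection]

theorem Submodule.starProjection_inf_eq_zero_of_add_eq_smul {x : H} {μ : 𝕜} (hμ : μ ≠ 2)
    (h : K.starProjection x + L.starProjection x = μ • x) : (K ⊓ L).starProjection x = 0 := by
  have hP := congr((K ⊓ L).starProjection $h)
  rw [map_add, map_smul, starProjection_starProjection_of_le inf_le_left,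
    starProjection_starProjection_of_le inf_le_right, ← two_smul 𝕜, ← sub_eq_zero,
    ← sub_smul] at hP
  exact (smul_eq_zero.mp hP).resolve_left (sub_ne_zero.mpr hμ.symm)

theorem Submodule.star_mul_self_starProjection_mul_sub [CompleteSpace H] :
    star (K.starProjection * L.starProjection - (K ⊓ L).starProjection) *
        (K.starProjection * L.starProjection - (K ⊓ L).starProjection) =
      L.starProjection * K.starProjection * L.starProjection - (K ⊓ L).starProjection :=
  isStarProjection_starProjection.star_mul_sub_mul_mul_sub (isSelfAdjoint_starProjection L)
    isStarProjection_starProjection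
    (starProjection_comp_starProjection_of_le inf_le_left)
    (starProjection_comp_starProjection_of_le inf_le_right)

theorem Submodule.norm_one_sub_le_norm_starProjection_mul_sub [CompleteSpace H] {μ : 𝕜}
    (hμ₀ : μ ≠ 0) (hμ₂ : μ ≠ 2)
    (hμ : HasEigenvalue (K.starProjection + L.starProjection).toLinearMap μ) :
    ‖1 - μ‖ ≤ ‖K.starProjection * L.starProjection - (K ⊓ L).starProjection‖ := by
  obtain ⟨x, hx⟩ := hμ.exists_hasEigenvector
  have hKL : K.starProjection x + L.starProjection x = μ • x := hx.apply_eq_smul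
  have hLK : L.starProjection x + K.starProjection x = μ • x := by rwa [add_comm]
  rcases eq_or_ne μ 1 with rfl | hμ₁
  · simp
  have hPx := starProjection_inf_eq_zero_of_add_eq_smul hμ₂ hKL
  have hLx : L.starProjection x ≠ 0 := by
    intro h0
    have hKx : K.starProjection x = μ • x := by simpa [h0] using hKL
    have hμμ : (μ * μ) • x = μ • x := by
      rw [mul_smul, ← hKx, ← map_smul, ← hKx, starProjection_starProjection_self]
    exact hμ₁ (mul_left_cancel₀ hμ₀ ((smul_left_injective 𝕜 hx.2 hμμ).trans (mul_one μ).symm))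
  have hB : (star (K.starProjection * L.starProjection - (K ⊓ L).starProjection) *
      (K.starProjection * L.starProjection - (K ⊓ L).starProjection)) (L.starProjection x) =
      (1 - μ) ^ 2 • L.starProjection x := by
    rw [star_mul_self_starProjection_mul_sub, sub_apply, mul_apply_eq_comp, mul_apply_eq_comp,
      starProjection_starProjection_self, starProjection_starProjection_of_add_eq_smul hKL,
      map_smul, starProjection_starProjection_of_add_eq_smul hLK, smul_smul,
      starProjection_starProjection_of_le inf_le_right, hPx, sub_zero]
    ring_nf
  have := (norm_le_opNorm_of_apply_eq_smul hB hLx).trans_eq CStarRing.norm_star_mul_self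
  rw [norm_pow, ← sq] at this
  exact (pow_le_pow_iff_left₀ (norm_nonneg _) (norm_nonneg _) two_ne_zero).mp this

theorem Submodule.lt_one_and_hasEigenvalue_one_sub [CompleteSpace H] {c : ℝ} (hc : 0 < c)
    {y : H} (hy₀ : y ≠ 0)
    (hy : (star (K.starProjection * L.starProjection - (K ⊓ L).starProjection) *
      (K.starProjection * L.starProjection - (K ⊓ L).starProjection)) y = (c : 𝕜) ^ 2 • y) :
    c < 1 ∧ HasEigenvalue (K.starProjection + L.starProjection).toLinearMap ((1 - c : ℝ) : 𝕜) := by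
  rw [star_mul_self_starProjection_mul_sub, sub_apply, mul_apply_eq_comp, mul_apply_eq_comp] at hy
  have hc₂ : (c : 𝕜) ^ 2 ≠ 0 := by exact_mod_cast (pow_pos hc 2).ne'
  have hPy : (K ⊓ L).starProjection y = 0 := by
    have hP := congr((K ⊓ L).starProjection $hy)
    rw [map_sub, starProjection_starProjection_of_le inf_le_right,
      starProjection_starProjection_of_le inf_le_left,
      starProjection_starProjection_of_le inf_le_right, starProjection_starProjection_self,
      sub_self, map_smul] at hP
    exact (smul_eq_zero.mp hP.symm).resolve_left hc₂
  rw [hPy, sub_zero] at hy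
  have hLy : L.starProjection y = y := by
    rw [starProjection_eq_self_iff, ← inv_smul_smul₀ hc₂ y, ← hy]
    exact L.smul_mem _ (starProjection_apply_mem L _)
  rw [hLy] at hy
  have hKy := norm_starProjection_apply_eq_mul_norm hc.le hLy hy
  have hc₁ : c < 1 := by
    refine lt_of_le_of_ne ?_ ?_
    · have := norm_starProjection_apply_le K y
      rw [hKy] at this
      exact (mul_le_iff_le_one_left (norm_pos_iff.mpr hy₀)).mp this
    · rintro rfl
      have hyK : y ∈ K := (mem_iff_norm_starProjection K y).mpr (by rw [hKy, one_mul])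
      have hyKL : y ∈ K ⊓ L := ⟨hyK, hLy ▸ starProjection_apply_mem L y⟩
      exact hy₀ (by rw [← starProjection_eq_self_iff.mpr hyKL, hPy])
  refine ⟨hc₁, ?_⟩
  push_cast
  exact hasEigenvalue_of_hasEigenvector <| hasEigenvector_add_starProjection
    (by exact_mod_cast hc.ne') (by exact_mod_cast hc₁.ne) hy₀ hLy hy

end TwoProjections

end InnerProductSpace

section FiniteDimensional

variable {H : Type*} [NormedAddCommGroup H] [InnerProductSpace ℂ H] [FiniteDimensional ℂ H]

theorem ContinuousLinearMap.hasEigenvalue_norm_of_nonneg [Nontrivial H] {T : H →L[ℂ] H}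
    (hT : 0 ≤ T) : HasEigenvalue T.toLinearMap (‖T‖ : ℂ) := by
  have h := CStarAlgebra.norm_mem_spectrum_of_nonneg hT
  rw [← spectrum.preimage_algebraMap ℂ, Set.mem_preimage, spectrum_eq] at h
  exact hasEigenvalue_iff_mem_spectrum.mpr h

variable {K L : Submodule ℂ H}

theorem Submodule.hasEigenvalue_one_sub_norm_starProjection_mul_sub
    (hA : 0 < ‖K.starProjection * L.starProjection - (K ⊓ L).starProjection‖) :
    ‖K.starProjection * L.starProjection - (K ⊓ L).starProjection‖ < 1 ∧
      HasEigenvalue (K.starProjection + L.starProjection).toLinearMap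
        ((1 - ‖K.starProjection * L.starProjection - (K ⊓ L).starProjection‖ : ℝ) : ℂ) := by
  set A := K.starProjection * L.starProjection - (K ⊓ L).starProjection
  have : Nontrivial H := by
    by_contra h
    rw [not_nontrivial_iff_subsingleton] at h
    exact hA.ne' (by rw [Subsingleton.elim A 0, norm_zero])
  obtain ⟨y, hy⟩ := (hasEigenvalue_norm_of_nonneg (star_mul_self_nonneg A)).exists_hasEigenvector
  have hnorm : ‖star A * A‖ = ‖A‖ ^ 2 := CStarRing.norm_star_mul_self.trans (sq _).symm
  refine lt_one_and_hasEigenvalue_one_sub hA hy.2 ?_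
  rw [← RCLike.ofReal_pow, ← hnorm]
  exact hy.apply_eq_smul

theorem Submodule.isLeast_one_sub_norm_starProjection_mul_sub
    (hex : ∃ μ : ℝ, 0 < μ ∧ μ < 2 ∧
      HasEigenvalue (K.starProjection + L.starProjection).toLinearMap (μ : ℂ)) :
    IsLeast {μ : ℝ | 0 < μ ∧
        HasEigenvalue (K.starProjection + L.starProjection).toLinearMap (μ : ℂ)}
      (1 - ‖K.starProjection * L.starProjection - (K ⊓ L).starProjection‖) := by
  set A := K.starProjection * L.starProjection - (K ⊓ L).starProjection
  have hbound (μ : ℝ) (hμ₀ : μ ≠ 0) (hμ₂ : μ ≠ 2)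
      (hμ : HasEigenvalue (K.starProjection + L.starProjection).toLinearMap (μ : ℂ)) :
      |1 - μ| ≤ ‖A‖ := by
    simpa [← Complex.ofReal_one, ← Complex.ofReal_sub, Complex.norm_real] using
      norm_one_sub_le_norm_starProjection_mul_sub (by exact_mod_cast hμ₀) (by exact_mod_cast hμ₂) hμ
  refine ⟨?_, fun μ ⟨hμ, hμE⟩ => ?_⟩
  · rcases (norm_nonneg A).eq_or_lt with hA | hA
    · obtain ⟨μ, hμ₀, hμ₂, hμE⟩ := hex
      have hμ₁ : μ = 1 := by
        have := hbound μ hμ₀.ne' hμ₂.ne hμE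
        rw [← hA, abs_nonpos_iff, sub_eq_zero] at this
        exact this.symm
      rw [← hA, sub_zero]
      exact ⟨one_pos, hμ₁ ▸ hμE⟩
    · obtain ⟨hA₁, hAE⟩ := hasEigenvalue_one_sub_norm_starProjection_mul_sub hA
      exact ⟨sub_pos.mpr hA₁, hAE⟩
  · rcases le_or_gt 1 μ with h | h
    · linarith [norm_nonneg A]
    · linarith [hbound μ hμ.ne' (by linarith) hμE, le_abs_self (1 - μ)]

end FiniteDimensional

/-- For orthogonal projections `E`, `F` on a finite-dimensional Hilbert space,
`1 - ‖EF - E∧F‖` is the least eigenvalue of `E + F` strictly greater than `0`,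
provided `E + F` has an eigenvalue in the open interval `(0, 2)`. -/
theorem aklt_stmt_1 {H : Type*} [NormedAddCommGroup H] [InnerProductSpace ℂ H]
    [FiniteDimensional ℂ H] (E F : H →L[ℂ] H)
    (hE₁ : IsIdempotentElem E) (hE₂ : IsSelfAdjoint E)
    (hF₁ : IsIdempotentElem F) (hF₂ : IsSelfAdjoint F)
    (hex : ∃ μ : ℝ, 0 < μ ∧ μ < 2 ∧
      Module.End.HasEigenvalue ((E + F).toLinearMap) (μ : ℂ)) :
    IsLeast {μ : ℝ | 0 < μ ∧ Module.End.HasEigenvalue ((E + F).toLinearMap) (μ : ℂ)}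
      (1 - ‖E * F - projOnto (LinearMap.range (E : H →ₗ[ℂ] H) ⊓ LinearMap.range (F : H →ₗ[ℂ] H))‖) := by
  obtain ⟨_, hE⟩ := isStarProjection_iff_eq_starProjection_range.mp ⟨hE₁, hE₂⟩
  obtain ⟨_, hF⟩ := isStarProjection_iff_eq_starProjection_range.mp ⟨hF₁, hF₂⟩
  rw [hE, hF] at hex
  have h := isLeast_one_sub_norm_starProjection_mul_sub hex
  rwa [← hE, ← hF] at h
end

section
/- Let E, F be orthogonal projections on a finite-dimensional Hilbert space, and suppose Υ is an eigenvector of E + F with eigenvalue 1 - α where α ∉ {-1, 0, 1}. Write Υ = φ + ψ with φ ∈ range(E) ∩ (range(E) ∩ range(F))^⊥ and ψ ∈ range(F) ∩ (range(E) ∩ range(F))^⊥. Then Eψ = -αφ and Fφ = -αψ. -/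
/-!
Since `φ ∈ range E` and `ψ ∈ range F`, the eigenvalue equation reduces to
`Eψ + Fφ = -α (φ + ψ)`. The vector `x = Eψ + αφ = -(Fφ + αψ)` then lies in `range E ∩ range F`,
and also in its orthogonal complement, because `φ` does and `E` preserves the orthogonal
complement of any subspace of its range. Hence `x = 0`.
-/

namespace LinearMap

open Submodule

variable {𝕜 H : Type*} [RCLike 𝕜] [NormedAddCommGroup H] [InnerProductSpace 𝕜 H]

theorem IsSymmetric.apply_mem_orthogonal_of_le_range {P : H →ₗ[𝕜] H} (hP : P.IsSymmetric)
    (hP' : IsIdempotentElem P) {K : Submodule 𝕜 H} (hK : K ≤ range P) {x : H} (hx : x ∈ Kᗮ) :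
    P x ∈ Kᗮ := by
  intro v hv
  rw [← hP, (IsIdempotentElem.mem_range_iff hP').mp (hK hv)]
  exact hx v hv

theorem IsSymmetric.eq_smul_of_add_eq_smul_add {P Q : H →ₗ[𝕜] H} (hP : P.IsSymmetric)
    (hP' : IsIdempotentElem P) {φ ψ : H} (hφ : φ ∈ range P ⊓ (range P ⊓ range Q)ᗮ)
    (hψ : ψ ∈ range Q ⊓ (range P ⊓ range Q)ᗮ) {c : 𝕜} (h : P ψ + Q φ = c • (φ + ψ)) :
    P ψ = c • φ ∧ Q φ = c • ψ := by
  set x := P ψ - c • φ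
  have hxQ : x = -(Q φ - c • ψ) := by linear_combination (norm := module) h
  have hx : x ∈ (range P ⊓ range Q) ⊓ (range P ⊓ range Q)ᗮ := by
    refine ⟨⟨sub_mem (mem_range_self P ψ) (smul_mem _ c hφ.1), ?_⟩, ?_⟩
    · rw [hxQ]
      exact neg_mem (sub_mem (mem_range_self Q φ) (smul_mem _ c hψ.1))
    · exact sub_mem (hP.apply_mem_orthogonal_of_le_range hP' inf_le_left hψ.2)
        (smul_mem _ c hφ.2)
  have hx0 : x = 0 := by simpa [inf_orthogonal_eq_bot] using hx
  constructor
  · exact sub_eq_zero.mp hx0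
  · rw [hxQ, neg_eq_zero] at hx0
    exact sub_eq_zero.mp hx0

end LinearMap

theorem aklt_stmt_2_general {H : Type*} [NormedAddCommGroup H] [InnerProductSpace ℂ H]
    [FiniteDimensional ℂ H] (E F : H →L[ℂ] H)
    (hE₁ : IsIdempotentElem E) (hE₂ : IsSelfAdjoint E)
    (hF₁ : IsIdempotentElem F)
    (α : ℝ)
    (Υ φ ψ : H)
    (heig : (E + F) Υ = ((1 : ℂ) - (α : ℂ)) • Υ)
    (hdecomp : Υ = φ + ψ)
    (hφ : φ ∈ LinearMap.range (E : H →ₗ[ℂ] H) ⊓ (LinearMap.range (E : H →ₗ[ℂ] H) ⊓ LinearMap.range (F : H →ₗ[ℂ] H))ᗮ)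
    (hψ : ψ ∈ LinearMap.range (F : H →ₗ[ℂ] H) ⊓ (LinearMap.range (E : H →ₗ[ℂ] H) ⊓ LinearMap.range (F : H →ₗ[ℂ] H))ᗮ) :
    E ψ = (-(α : ℂ)) • φ ∧ F φ = (-(α : ℂ)) • ψ := by
  have hE := ContinuousLinearMap.isIdempotentElem_toLinearMap_iff.mpr hE₁
  have hF := ContinuousLinearMap.isIdempotentElem_toLinearMap_iff.mpr hF₁
  have hEφ : E φ = φ := (LinearMap.IsIdempotentElem.mem_range_iff hE).mp hφ.1
  have hFψ : F ψ = ψ := (LinearMap.IsIdempotentElem.mem_range_iff hF).mp hψ.1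
  have hcross : E ψ + F φ = (-(α : ℂ)) • (φ + ψ) := by
    rw [hdecomp, add_apply, map_add, map_add, hEφ, hFψ] at heig
    linear_combination (norm := module) heig
  exact hE₂.isSymmetric.eq_smul_of_add_eq_smul_add hE hφ hψ hcross

/-- Eigenvector decomposition for `E + F`: if `Υ = φ + ψ` is an eigenvector of `E + F`
with eigenvalue `1 - α`, `α ∉ {-1, 0, 1}`, with `φ ∈ range E ∩ (range E ∩ range F)ᗮ`
and `ψ ∈ range F ∩ (range E ∩ range F)ᗮ`, then `Eψ = -αφ` and `Fφ = -αψ`. -/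
theorem aklt_stmt_2 {H : Type*} [NormedAddCommGroup H] [InnerProductSpace ℂ H]
    [FiniteDimensional ℂ H] (E F : H →L[ℂ] H)
    (hE₁ : IsIdempotentElem E) (hE₂ : IsSelfAdjoint E)
    (hF₁ : IsIdempotentElem F) (hF₂ : IsSelfAdjoint F)
    (α : ℝ) (hα : α ≠ -1 ∧ α ≠ 0 ∧ α ≠ 1)
    (Υ φ ψ : H) (hΥ : Υ ≠ 0)
    (heig : (E + F) Υ = ((1 : ℂ) - (α : ℂ)) • Υ)
    (hdecomp : Υ = φ + ψ)
    (hφ : φ ∈ LinearMap.range (E : H →ₗ[ℂ] H) ⊓ (LinearMap.range (E : H →ₗ[ℂ] H) ⊓ LinearMap.range (F : H →ₗ[ℂ] H))ᗮ)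
    (hψ : ψ ∈ LinearMap.range (F : H →ₗ[ℂ] H) ⊓ (LinearMap.range (E : H →ₗ[ℂ] H) ⊓ LinearMap.range (F : H →ₗ[ℂ] H))ᗮ) :
    E ψ = (-(α : ℂ)) • φ ∧ F φ = (-(α : ℂ)) • ψ :=
  aklt_stmt_2_general E F hE₁ hE₂ hF₁ α Υ φ ψ heig hdecomp hφ hψ
end

section
/- Let E, F be orthogonal projections on a finite-dimensional Hilbert space and suppose Υ = φ + ψ is an eigenvector of E + F with eigenvalue 1 - α, α ∉ {-1,0,1}, where φ ∈ range(E), ψ ∈ range(F), Eψ = -αφ + θ and Fφ = -αψ - θ with θ ∈ range(E) ∩ range(F) and θ orthogonal to both φ and ψ. Then θ = 0. -/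
open scoped InnerProductSpace

theorem ContinuousLinearMap.inner_apply_right_of_mem_range {𝕜 E : Type*} [RCLike 𝕜]
    [NormedAddCommGroup E] [InnerProductSpace 𝕜 E] [CompleteSpace E] {P : E →L[𝕜] E}
    (hP₁ : IsIdempotentElem P) (hP₂ : IsSelfAdjoint P) {x : E}
    (hx : x ∈ LinearMap.range (P : E →ₗ[𝕜] E)) (y : E) :
    ⟪x, P y⟫_𝕜 = ⟪x, y⟫_𝕜 := by
  have hPx : P x = x :=
    (LinearMap.IsIdempotentElem.mem_range_iff (IsIdempotentElem.toLinearMap hP₁)).mp hx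
  rw [← adjoint_inner_left, hP₂.adjoint_eq, hPx]

theorem aklt_stmt_3_general {H : Type*} [NormedAddCommGroup H] [InnerProductSpace ℂ H]
    [FiniteDimensional ℂ H] (E F : H →L[ℂ] H)
    (hE₁ : IsIdempotentElem E) (hE₂ : IsSelfAdjoint E)
    (α : ℝ)
    (φ ψ θ : H)
    (hEψ : E ψ = (-(α : ℂ)) • φ + θ)
    (hθ : θ ∈ LinearMap.range (E : H →ₗ[ℂ] H) ⊓ LinearMap.range (F : H →ₗ[ℂ] H))
    (hθφ : ⟪θ, φ⟫_ℂ = 0) (hθψ : ⟪θ, ψ⟫_ℂ = 0) :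
    θ = 0 := by
  have hθθ : ⟪θ, θ⟫_ℂ = 0 :=
    calc ⟪θ, θ⟫_ℂ = ⟪θ, E ψ + (α : ℂ) • φ⟫_ℂ := by rw [hEψ, neg_smul, neg_add_cancel_comm]
      _ = ⟪θ, E ψ⟫_ℂ := by rw [inner_add_right, inner_smul_right, hθφ, mul_zero, add_zero]
      _ = ⟪θ, ψ⟫_ℂ := E.inner_apply_right_of_mem_range hE₁ hE₂ hθ.1 ψ
      _ = 0 := hθψ
  exact inner_self_eq_zero.mp hθθ

/-- If `Υ = φ + ψ` is an eigenvector of `E + F` with eigenvalue `1 - α`, `α ∉ {-1,0,1}`,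
where `φ ∈ V_E`, `ψ ∈ V_F`, `Eψ = -αφ + θ`, `Fφ = -αψ - θ` with
`θ ∈ range E ∩ range F` orthogonal to both `φ` and `ψ`, then `θ = 0`. -/
theorem aklt_stmt_3 {H : Type*} [NormedAddCommGroup H] [InnerProductSpace ℂ H]
    [FiniteDimensional ℂ H] (E F : H →L[ℂ] H)
    (hE₁ : IsIdempotentElem E) (hE₂ : IsSelfAdjoint E)
    (hF₁ : IsIdempotentElem F) (hF₂ : IsSelfAdjoint F)
    (α : ℝ) (hα : α ≠ -1 ∧ α ≠ 0 ∧ α ≠ 1)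
    (φ ψ θ : H) (hΥ : φ + ψ ≠ 0)
    (heig : (E + F) (φ + ψ) = ((1 : ℂ) - (α : ℂ)) • (φ + ψ))
    (hφ : φ ∈ LinearMap.range (E : H →ₗ[ℂ] H) ⊓ (LinearMap.range (E : H →ₗ[ℂ] H) ⊓ LinearMap.range (F : H →ₗ[ℂ] H))ᗮ)
    (hψ : ψ ∈ LinearMap.range (F : H →ₗ[ℂ] H) ⊓ (LinearMap.range (E : H →ₗ[ℂ] H) ⊓ LinearMap.range (F : H →ₗ[ℂ] H))ᗮ)
    (hEψ : E ψ = (-(α : ℂ)) • φ + θ)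
    (hFφ : F φ = (-(α : ℂ)) • ψ - θ)
    (hθ : θ ∈ LinearMap.range (E : H →ₗ[ℂ] H) ⊓ LinearMap.range (F : H →ₗ[ℂ] H))
    (hθφ : ⟪θ, φ⟫_ℂ = 0) (hθψ : ⟪θ, ψ⟫_ℂ = 0) :
    θ = 0 :=
  aklt_stmt_3_general E F hE₁ hE₂ α φ ψ θ hEψ hθ hθφ hθψ
end
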